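/- In the conjugate left 𝕆-module 𝕆̄ (action p ⋆ m = p̄m), an element m is conjugate associative, i.e., (pq) ⋆ m = q ⋆ (p ⋆ m) for all p, q ∈ 𝕆, if and only if m ∈ ℝ·1; and the only associative element of 𝕆̄ is 0. -/

import Mathlib

noncomputable section

open Quaternion

/-- The octonions, via the Cayley–Dickson construction on the quaternions. -/
def Octonion : Type := ℍ[ℝ] × ℍ[ℝ]

namespace Octonion

instance : AddCommGroup Octonion := inferInstanceAs (AddCommGroup (ℍ[ℝ] × ℍ[ℝ]))
instance : Module ℝ Octonion := inferInstanceAs (Module ℝ (ℍ[ℝ] × ℍ[ℝ]))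

instance : One Octonion := ⟨((1 : ℍ[ℝ]), (0 : ℍ[ℝ]))⟩
instance : Mul Octonion :=
  ⟨fun x y => (x.1 * y.1 - star y.2 * x.2, y.2 * x.1 + x.2 * star y.1)⟩
/-- Octonionic conjugation. -/
instance : Star Octonion := ⟨fun x => (star x.1, -x.2)⟩

/-- The associator `[a,b,c] = (ab)c - a(bc)`. -/
def assoc (a b c : Octonion) : Octonion := a * b * c - a * (b * c)

/-- The standard imaginary units `e 0 = e₁, …, e 6 = e₇`. -/
def e : Fin 7 → Octonion
  | 0 => ((⟨0,1,0,0⟩ : ℍ[ℝ]), 0)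
  | 1 => ((⟨0,0,1,0⟩ : ℍ[ℝ]), 0)
  | 2 => ((⟨0,0,0,1⟩ : ℍ[ℝ]), 0)
  | 3 => (0, (1 : ℍ[ℝ]))
  | 4 => (0, (⟨0,1,0,0⟩ : ℍ[ℝ]))
  | 5 => (0, (⟨0,0,1,0⟩ : ℍ[ℝ]))
  | 6 => (0, (⟨0,0,0,1⟩ : ℍ[ℝ]))

end Octonion

/-- A left `𝕆`-module: a real vector space with an `ℝ`-bilinear octonion action
satisfying `1 • m = m` and the alternating rule. -/
structure LeftOModule (M : Type) [AddCommGroup M] [Module ℝ M] where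
  smul : Octonion →ₗ[ℝ] M →ₗ[ℝ] M
  one_smul : ∀ m : M, smul 1 m = m
  alt : ∀ (p q : Octonion) (m : M),
    smul (p * q) m - smul p (smul q m) = -(smul (q * p) m - smul q (smul p m))

/-- An `𝕆`-bimodule: compatible left and right `𝕆`-module structures with
`[p,q,m] = [q,m,p] = [m,p,q]`.  Here `l p m` is `p * m` and `r p m` is `m * p`. -/
structure OBimodule (M : Type) [AddCommGroup M] [Module ℝ M] where
  l : Octonion →ₗ[ℝ] M →ₗ[ℝ] M
  r : Octonion →ₗ[ℝ] M →ₗ[ℝ] M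
  one_l : ∀ m : M, l 1 m = m
  one_r : ∀ m : M, r 1 m = m
  /-- left alternating rule `[p,q,m] = -[q,p,m]` -/
  alt_l : ∀ (p q : Octonion) (m : M),
    l (p * q) m - l p (l q m) = -(l (q * p) m - l q (l p m))
  /-- right alternating rule `[m,p,q] = -[m,q,p]` -/
  alt_r : ∀ (p q : Octonion) (m : M),
    r q (r p m) - r (p * q) m = -(r p (r q m) - r (q * p) m)
  /-- `[p,q,m] = [q,m,p]` -/
  comp_lm : ∀ (p q : Octonion) (m : M),
    l (p * q) m - l p (l q m) = r p (l q m) - l q (r p m)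
  /-- `[p,q,m] = [m,p,q]` -/
  comp_rm : ∀ (p q : Octonion) (m : M),
    l (p * q) m - l p (l q m) = r q (r p m) - r (p * q) m

/-!
Since conjugation reverses products, `m` is conjugate associative in `𝕆̄` iff the associator
`[a, b, m]` vanishes for all `a, b`, and associative iff `(b a) m = a (b m)` for all `a, b`.
Write `m = (u, v)` as a Cayley–Dickson pair of quaternions. In the first case
`[(x, 0), (0, 1), m] = (v x - x v, u x - x u)` makes `u` central in `ℍ`, hence real, and
`[(i, 0), (j, 0), m] = (0, v (i j - j i))` kills `v`. In the second case the pair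
`(j, 0), (i, 0)` gives `(i j - j i) u = 0`, while `(x, 0), (0, 1)` gives `v̄ x̄ = x v̄` for every
`x`, which forces `v = 0`.
-/

namespace Quaternion

/- Named, so that they have type `ℍ[ℝ]`: a literal `⟨0, 1, 0, 0⟩` elaborates at type
`QuaternionAlgebra ℝ (-1) 0 (-1)`, where the `Quaternion` simp lemmas do not apply. -/
@[simps] def i : ℍ[ℝ] := ⟨0, 1, 0, 0⟩
@[simps] def j : ℍ[ℝ] := ⟨0, 0, 1, 0⟩
@[simps] def k : ℍ[ℝ] := ⟨0, 0, 0, 1⟩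

theorem i_mul_j_sub_j_mul_i_ne_zero : i * j - j * i ≠ 0 := by
  intro h
  simpa [imK_mul] using congrArg QuaternionAlgebra.imK h

theorem eq_coe_re_of_forall_commute {u : ℍ[ℝ]} (h : ∀ x, Commute u x) : u = u.re := by
  have hi := (h i).eq
  have hj := (h j).eq
  simp [Quaternion.ext_iff, re_mul, imI_mul, imJ_mul, imK_mul] at hi hj
  ext <;> simp <;> linarith

theorem eq_zero_of_forall_mul_star_eq_mul {w : ℍ[ℝ]} (h : ∀ x, w * star x = x * w) :
    w = 0 := by
  have hi := h i
  have hj := h j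
  have hk := h k
  simp [Quaternion.ext_iff, re_mul, imI_mul, imJ_mul, imK_mul] at hi hj hk
  ext <;> simp <;> linarith

theorem mul_star_sub_star_mul {R : Type*} [CommRing R] (x u : ℍ[R]) :
    x * star u - star u * x = u * x - x * u := by
  rw [star_eq_two_re_sub, mul_sub, sub_mul, coe_commutes]
  abel

end Quaternion

namespace Octonion

@[ext] theorem ext {x y : Octonion} (h₁ : x.1 = y.1) (h₂ : x.2 = y.2) : x = y :=
  Prod.ext h₁ h₂

/- A pair `(a, b)` would be typed `ℍ[ℝ] × ℍ[ℝ]` and multiplied componentwise. -/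
def mk (a b : ℍ[ℝ]) : Octonion := (a, b)

@[simp] theorem fst_mk (a b : ℍ[ℝ]) : (mk a b).1 = a := rfl
@[simp] theorem snd_mk (a b : ℍ[ℝ]) : (mk a b).2 = b := rfl
@[simp] theorem mk_eq_zero_iff (a b : ℍ[ℝ]) : mk a b = 0 ↔ a = 0 ∧ b = 0 := Prod.ext_iff

@[simp] theorem fst_mul (x y : Octonion) : (x * y).1 = x.1 * y.1 - star y.2 * x.2 := rfl
@[simp] theorem snd_mul (x y : Octonion) : (x * y).2 = y.2 * x.1 + x.2 * star y.1 := rfl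
@[simp] theorem fst_star (x : Octonion) : (star x).1 = star x.1 := rfl
@[simp] theorem snd_star (x : Octonion) : (star x).2 = -x.2 := rfl
@[simp] theorem fst_one : (1 : Octonion).1 = 1 := rfl
@[simp] theorem snd_one : (1 : Octonion).2 = 0 := rfl
@[simp] theorem fst_zero : (0 : Octonion).1 = 0 := rfl
@[simp] theorem snd_zero : (0 : Octonion).2 = 0 := rfl
@[simp] theorem fst_sub (x y : Octonion) : (x - y).1 = x.1 - y.1 := rfl
@[simp] theorem snd_sub (x y : Octonion) : (x - y).2 = x.2 - y.2 := rfl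
@[simp] theorem fst_smul (r : ℝ) (x : Octonion) : (r • x).1 = r • x.1 := rfl
@[simp] theorem snd_smul (r : ℝ) (x : Octonion) : (r • x).2 = r • x.2 := rfl

instance : StarMul Octonion where
  star_involutive x := by ext <;> simp
  star_mul x y := by ext1 <;> simp [sub_eq_add_neg, add_comm]

theorem assoc_smul_one (a b : Octonion) (r : ℝ) : assoc a b (r • 1) = 0 := by
  ext1 <;> simp [assoc, smul_sub]

theorem assoc_mk_zero_mk_zero (x y : ℍ[ℝ]) (m : Octonion) :
    assoc (mk x 0) (mk y 0) m = mk 0 (m.2 * (x * y - y * x)) := by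
  ext1 <;> simp [assoc, mul_sub, mul_assoc]

theorem assoc_mk_zero_mk_zero_one (x : ℍ[ℝ]) (m : Octonion) :
    assoc (mk x 0) (mk 0 1) m = mk (m.2 * x - x * m.2) (m.1 * x - x * m.1) := by
  ext1
  · simpa [assoc, neg_add_eq_sub] using mul_star_sub_star_mul x m.2
  · simpa [assoc] using mul_star_sub_star_mul x m.1

theorem forall_assoc_eq_zero_iff (m : Octonion) :
    (∀ a b, assoc a b m = 0) ↔ ∃ r : ℝ, m = r • 1 := by
  refine ⟨fun h => ?_, fun ⟨r, hm⟩ a b => hm ▸ assoc_smul_one a b r⟩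
  have hcomm : ∀ x, Commute m.1 x := fun x => (commute_iff_eq _ _).2 <| by
    simpa [assoc_mk_zero_mk_zero_one, sub_eq_zero] using congrArg Prod.snd (h (mk x 0) (mk 0 1))
  have h₂ : m.2 * (i * j - j * i) = 0 := by
    simpa [assoc_mk_zero_mk_zero] using h (mk i 0) (mk j 0)
  refine ⟨m.1.re, ?_⟩
  ext1
  · simpa [← coe_mul_eq_smul] using eq_coe_re_of_forall_commute hcomm
  · simpa using (mul_eq_zero.1 h₂).resolve_right i_mul_j_sub_j_mul_i_ne_zero

theorem eq_zero_of_forall_mul_mul_eq_mul_mul {m : Octonion}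
    (h : ∀ a b : Octonion, b * a * m = a * (b * m)) : m = 0 := by
  have h₁ : (i * j - j * i) * m.1 = 0 := by
    simpa [sub_mul, sub_eq_zero, mul_assoc] using congrArg Prod.fst (h (mk j 0) (mk i 0))
  have h₂ : ∀ x, star m.2 * star x = x * star m.2 := fun x => by
    simpa using congrArg Prod.fst (h (mk x 0) (mk 0 1))
  ext1
  · exact (mul_eq_zero.1 h₁).resolve_left i_mul_j_sub_j_mul_i_ne_zero
  · exact star_eq_zero.1 (eq_zero_of_forall_mul_star_eq_mul h₂)

end Octonion

/-- In the conjugate module `𝕆̄` (action `p ⋆ m = p̄m`), the conjugate associative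
elements are exactly `ℝ·1`, and the only associative element is `0`. -/
theorem conjAssoc_of_O_conj (m : Octonion) :
    ((∀ p q : Octonion, star (p * q) * m = star q * (star p * m)) ↔
      ∃ r : ℝ, m = r • (1 : Octonion)) ∧
    ((∀ p q : Octonion, star (p * q) * m = star p * (star q * m)) → m = 0) := by
  simp only [star_mul]
  refine ⟨?_, fun h => Octonion.eq_zero_of_forall_mul_mul_eq_mul_mul fun a b => ?_⟩
  · rw [← Octonion.forall_assoc_eq_zero_iff]
    refine ⟨fun h a b => ?_, fun h p q => sub_eq_zero.1 (h _ _)⟩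
    simpa [Octonion.assoc, sub_eq_zero] using h (star b) (star a)
  · simpa using h (star a) (star b)
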